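/- For regret matching with bounded regrets, the maximum regret on any single action after T iterations is bounded: max_a R_T(a) ≤ Δ √(|A|·T). -/

import Mathlib

/-!
Write `x⁺ = max x 0` and `Φ(R) = ∑ₐ R(a)⁺²` (Blackwell's potential). Since
`(x + y)⁺ ≤ |x⁺ + y|`, one round changes the potential by at most
`2 ∑ₐ R_{t-1}(a)⁺ r_t(a) + ∑ₐ r_t(a)²`. Regret matching plays `σ_t ∝ R_{t-1}⁺`, and every
regret vector has zero mean under the strategy that produced it, so the cross term vanishes
and `Φ(R_T) ≤ |A| Δ² T`. Finally `R_T(a) ≤ √Φ(R_T)`.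
-/

open Finset

theorem sum_mul_sub_sum_mul_eq_zero {ι : Type*} [Fintype ι] {σ : ι → ℝ}
    (hσ : ∑ i, σ i = 1) (u : ι → ℝ) :
    ∑ i, σ i * (u i - ∑ j, σ j * u j) = 0 := by
  simp only [mul_sub, sum_sub_distrib, ← sum_mul, hσ, one_mul, sub_self]

theorem sum_max_zero_mul_eq_zero {ι : Type*} [Fintype ι] {x σ g : ι → ℝ}
    (hσ : 0 < ∑ i, max (x i) 0 → ∀ i, σ i = max (x i) 0 / ∑ j, max (x j) 0)
    (hg : ∑ i, σ i * g i = 0) :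
    ∑ i, max (x i) 0 * g i = 0 := by
  rcases (sum_nonneg fun i _ => le_max_right (x i) 0).eq_or_lt with hS | hS
  · have hzero := (sum_eq_zero_iff_of_nonneg fun i _ => le_max_right (x i) 0).1 hS.symm
    exact sum_eq_zero fun i hi => by rw [hzero i hi, zero_mul]
  · calc ∑ i, max (x i) 0 * g i = ∑ i, (∑ j, max (x j) 0) * (σ i * g i) :=
          sum_congr rfl fun i _ => by rw [hσ hS i, ← mul_assoc, mul_div_cancel₀ _ hS.ne']
      _ = 0 := by rw [← mul_sum, hg, mul_zero]

theorem max_add_zero_sq_le (x y : ℝ) : max (x + y) 0 ^ 2 ≤ (max x 0 + y) ^ 2 := by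
  rcases le_or_gt (x + y) 0 with h | h
  · rw [max_eq_right h, sq, zero_mul]
    positivity
  · rw [max_eq_left h.le]
    exact pow_le_pow_left₀ h.le (by linarith [le_max_left x 0]) 2

theorem sum_max_add_zero_sq_le {ι : Type*} [Fintype ι] {x y : ι → ℝ}
    (horth : ∑ i, max (x i) 0 * y i = 0) :
    ∑ i, max (x i + y i) 0 ^ 2 ≤ ∑ i, max (x i) 0 ^ 2 + ∑ i, y i ^ 2 :=
  calc ∑ i, max (x i + y i) 0 ^ 2
      ≤ ∑ i, (max (x i) 0 + y i) ^ 2 := sum_le_sum fun i _ => max_add_zero_sq_le _ _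
    _ = ∑ i, max (x i) 0 ^ 2 + 2 * ∑ i, max (x i) 0 * y i + ∑ i, y i ^ 2 := by
      simp only [add_sq, sum_add_distrib, mul_sum, mul_assoc]
    _ = ∑ i, max (x i) 0 ^ 2 + ∑ i, y i ^ 2 := by rw [horth, mul_zero, add_zero]

theorem sum_max_zero_sq_le_of_orthogonal {ι : Type*} [Fintype ι] {Δ : ℝ}
    {R g : ℕ → ι → ℝ} (hR0 : ∀ i, R 0 i = 0) (hRsucc : ∀ n i, R (n + 1) i = R n i + g n i)
    (hg : ∀ n i, |g n i| ≤ Δ) (horth : ∀ n, ∑ i, max (R n i) 0 * g n i = 0) (n : ℕ) :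
    ∑ i, max (R n i) 0 ^ 2 ≤ Fintype.card ι * Δ ^ 2 * n := by
  induction n with
  | zero => simp [hR0]
  | succ n ih =>
    have hg_sq : ∑ i, g n i ^ 2 ≤ Fintype.card ι * Δ ^ 2 := by
      calc ∑ i, g n i ^ 2 ≤ ∑ _i : ι, Δ ^ 2 :=
            sum_le_sum fun i _ => sq_abs (g n i) ▸ pow_le_pow_left₀ (abs_nonneg _) (hg n i) 2
        _ = Fintype.card ι * Δ ^ 2 := by rw [sum_const, card_univ, nsmul_eq_mul]
    calc ∑ i, max (R (n + 1) i) 0 ^ 2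
        ≤ ∑ i, max (R n i) 0 ^ 2 + ∑ i, g n i ^ 2 := by
          simpa only [hRsucc] using sum_max_add_zero_sq_le (horth n)
      _ ≤ Fintype.card ι * Δ ^ 2 * (n + 1 : ℕ) := by
          push_cast
          linarith

theorem le_sqrt_sum_max_zero_sq {ι : Type*} [Fintype ι] (x : ι → ℝ) (i : ι) :
    x i ≤ √(∑ j, max (x j) 0 ^ 2) :=
  calc x i ≤ max (x i) 0 := le_max_left _ _
    _ = √(max (x i) 0 ^ 2) := (Real.sqrt_sq (le_max_right _ _)).symm
    _ ≤ √(∑ j, max (x j) 0 ^ 2) :=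
      Real.sqrt_le_sqrt (single_le_sum (f := fun j => max (x j) 0 ^ 2)
        (fun _ _ => sq_nonneg _) (mem_univ i))

theorem regret_matching_max_regret_bound_general
    {A : Type*} [Fintype A] (T : ℕ) (Δ : ℝ) (hΔ : 0 ≤ Δ)
    (u σ : ℕ → A → ℝ)
    (hσ1 : ∀ t, ∑ a, σ t a = 1)
    (r : ℕ → A → ℝ) (hr : ∀ t a, r t a = u t a - ∑ a', σ t a' * u t a')
    (hrbd : ∀ t a, |r t a| ≤ Δ)
    (R : ℕ → A → ℝ) (hR : ∀ n a, R n a = ∑ t ∈ Finset.Icc 1 n, r t a)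
    (hrm : ∀ t, 0 < (∑ a, max (R t a) 0) →
      ∀ a, σ (t + 1) a = max (R t a) 0 / ∑ a', max (R t a') 0) :
    ∀ a, R T a ≤ Δ * Real.sqrt ((Fintype.card A : ℝ) * T) := by
  have hmean : ∀ t, ∑ a, σ t a * r t a = 0 := fun t => by
    simpa only [hr] using sum_mul_sub_sum_mul_eq_zero (hσ1 t) (u t)
  have hRsucc : ∀ n a, R (n + 1) a = R n a + r (n + 1) a := fun n a => by
    rw [hR, hR, sum_Icc_succ_top (by omega)]
  have hpotential := sum_max_zero_sq_le_of_orthogonal (by simp [hR]) hRsucc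
    (fun n => hrbd (n + 1)) (fun n => sum_max_zero_mul_eq_zero (hrm n) (hmean (n + 1))) T
  intro a
  calc R T a ≤ √(∑ b, max (R T b) 0 ^ 2) := le_sqrt_sum_max_zero_sq (R T) a
    _ ≤ √(Δ ^ 2 * (Fintype.card A * T)) := Real.sqrt_le_sqrt (by linarith)
    _ = Δ * √(Fintype.card A * T) := by rw [Real.sqrt_mul (sq_nonneg Δ), Real.sqrt_sq hΔ]

/-- Regret matching guarantee: after T iterations with instantaneous regrets bounded
by Δ, the maximum cumulative regret on any action is at most Δ√(|A|·T). -/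
theorem regret_matching_max_regret_bound
    {A : Type*} [Fintype A] [Nonempty A] (T : ℕ) (Δ : ℝ) (hΔ : 0 ≤ Δ)
    (u σ : ℕ → A → ℝ)
    (hσ0 : ∀ t a, 0 ≤ σ t a) (hσ1 : ∀ t, ∑ a, σ t a = 1)
    (r : ℕ → A → ℝ) (hr : ∀ t a, r t a = u t a - ∑ a', σ t a' * u t a')
    (hrbd : ∀ t a, |r t a| ≤ Δ)
    (R : ℕ → A → ℝ) (hR : ∀ n a, R n a = ∑ t ∈ Finset.Icc 1 n, r t a)
    (hrm : ∀ t, 0 < (∑ a, max (R t a) 0) →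
      ∀ a, σ (t + 1) a = max (R t a) 0 / ∑ a', max (R t a') 0) :
    ∀ a, R T a ≤ Δ * Real.sqrt ((Fintype.card A : ℝ) * T) :=
  regret_matching_max_regret_bound_general T Δ hΔ u σ hσ1 r hr hrbd R hR hrm
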